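/- arXiv:2209.13922 — 3 statements merged into one kernel-verified Lean document; each statement's English description precedes it below -/
import Mathlib

section
/- Let l ≥ 2. The centralizer of ι in the symmetric group on {1,…,2l} is generated by the transposition exchanging l and l+1, together with the permutations (i j)(ι(i) ι(j)) (the product of the transposition exchanging i and j with the transposition exchanging 2l+1−i and 2l+1−j) for all 1 ≤ i < j ≤ l. -/
noncomputable section

/-- The permutation `ι` of `{1,…,n}` given (1-based) by `i ↦ n + 1 - i`. -/
def iotaPerm (n : ℕ) : Equiv.Perm (Fin n) where
  toFun i := ⟨n - 1 - (i : ℕ), by have := i.isLt; omega⟩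
  invFun i := ⟨n - 1 - (i : ℕ), by have := i.isLt; omega⟩
  left_inv i := by have := i.isLt; apply Fin.ext; show n - 1 - (n - 1 - (i : ℕ)) = _; omega
  right_inv i := by have := i.isLt; apply Fin.ext; show n - 1 - (n - 1 - (i : ℕ)) = _; omega

end

/-!
Every `swap x (ι x)` and every `(x y)(ι x ι y)` commutes with `ι`, and conjugating `(l, l+1)` and
the pair swaps of the lower half by one another yields all of them. Conversely, if `σ` commutes
with `ι` and moves `x`, then multiplying `σ` on the left by `(x σx)` when `σ x = ι x`, and by
`(x σx)(ιx ισx)` otherwise, fixes `x`, `ι x` and every fixed point of `σ`; induction on the size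
of the support finishes.
-/

open Equiv Function Subgroup

namespace Equiv.Perm

variable {α : Type*}

theorem apply_iota_of_mem_centralizer {ι f : Perm α} (hf : f ∈ centralizer {ι}) (x : α) :
    f (ι x) = ι (f x) :=
  DFunLike.congr_fun (mem_centralizer_singleton_iff.mp hf) x

variable [DecidableEq α]

def pairSwap (ι : Perm α) (a b : α) : Perm α := swap a b * swap (ι a) (ι b)

variable {ι : Perm α}

theorem pairSwap_comm (a b : α) : pairSwap ι a b = pairSwap ι b a := by
  rw [pairSwap, pairSwap, swap_comm a, swap_comm (ι a)]

theorem pairSwap_self (a : α) : pairSwap ι a a = 1 := by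
  rw [pairSwap, swap_eq_one_iff.mpr rfl, swap_eq_one_iff.mpr rfl, one_mul]

theorem pairSwap_iota_right (hι : Involutive ι) (a : α) : pairSwap ι a (ι a) = 1 := by
  rw [pairSwap, hι a, swap_comm, swap_mul_self]

theorem commute_swap_swap_iota (hι : Involutive ι) (hfree : ∀ x, ι x ≠ x) (a b : α) :
    Commute (swap a b) (swap (ι a) (ι b)) := by
  obtain rfl | hab := eq_or_ne a b
  · simp
  obtain rfl | hb := eq_or_ne b (ι a)
  · rw [hι, swap_comm]
  refine (disjoint_swap_swap ?_).commute
  have := hι.injective.ne hab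
  have := hfree a
  have := hfree b
  have : a ≠ ι b := fun h => hb (by rw [h, hι])
  simp_all [eq_comm]

theorem pairSwap_iota_iota (hι : Involutive ι) (hfree : ∀ x, ι x ≠ x) (a b : α) :
    pairSwap ι (ι a) (ι b) = pairSwap ι a b := by
  rw [pairSwap, pairSwap, hι a, hι b]
  exact (commute_swap_swap_iota hι hfree a b).eq.symm

theorem pairSwap_apply_left (hι : Involutive ι) (hfree : ∀ x, ι x ≠ x) {a b : α}
    (hb : b ≠ ι a) : pairSwap ι a b a = b := by
  have hab : a ≠ ι b := fun h => hb (by rw [h, hι])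
  rw [pairSwap, Perm.mul_apply, swap_apply_of_ne_of_ne (hfree a).symm hab, swap_apply_left]

theorem swap_iota_mem_centralizer (hι : Involutive ι) (a : α) : swap a (ι a) ∈ centralizer {ι} := by
  rw [mem_centralizer_singleton_iff, mul_swap_eq_swap_mul, hι, swap_comm]

theorem conj_swap_mul_swap (f : Perm α) (a b c d : α) :
    f * (swap a b * swap c d) * f⁻¹ = swap (f a) (f b) * swap (f c) (f d) := by
  rw [swap_apply_apply, swap_apply_apply]
  group

theorem pairSwap_mem_centralizer (hι : Involutive ι) (hfree : ∀ x, ι x ≠ x) (a b : α) :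
    pairSwap ι a b ∈ centralizer {ι} := by
  rw [mem_centralizer_singleton_iff, eq_comm, ← mul_inv_eq_iff_eq_mul, pairSwap,
    conj_swap_mul_swap, hι, hι]
  exact (commute_swap_swap_iota hι hfree a b).eq.symm

theorem conj_swap_iota {f : Perm α} (hf : f ∈ centralizer {ι}) (x : α) :
    f * swap x (ι x) * f⁻¹ = swap (f x) (ι (f x)) := by
  rw [← swap_apply_apply, apply_iota_of_mem_centralizer hf]

theorem conj_pairSwap {f : Perm α} (hf : f ∈ centralizer {ι}) (a b : α) :
    f * pairSwap ι a b * f⁻¹ = pairSwap ι (f a) (f b) := by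
  rw [pairSwap, conj_swap_mul_swap, apply_iota_of_mem_centralizer hf,
    apply_iota_of_mem_centralizer hf, pairSwap]

theorem card_support_pairSwap_mul_lt [Fintype α] (hι : Involutive ι) (hfree : ∀ x, ι x ≠ x)
    {σ : Perm α} (hσ : σ ∈ centralizer {ι}) {x : α} (hx : σ x ≠ x) (hxι : σ x ≠ ι x) :
    (pairSwap ι x (σ x) * σ).support.card < σ.support.card := by
  set τ := swap (ι x) (σ (ι x)) * σ
  have hιx : σ (ι x) ≠ ι x := by
    rw [apply_iota_of_mem_centralizer hσ]
    exact hι.injective.ne hx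
  have hτx : τ x = σ x := by
    rw [Perm.mul_apply, apply_iota_of_mem_centralizer hσ]
    exact swap_apply_of_ne_of_ne hxι (hfree _).symm
  have hτ : pairSwap ι x (σ x) * σ = swap x (τ x) * τ := by
    rw [hτx, pairSwap, mul_assoc, ← apply_iota_of_mem_centralizer hσ]
  rw [hτ]
  calc (swap x (τ x) * τ).support.card < τ.support.card := card_support_swap_mul (hτx ▸ hx)
    _ < σ.support.card := card_support_swap_mul hιx

theorem centralizer_le_of_forall_mem [Fintype α] (hι : Involutive ι) (hfree : ∀ x, ι x ≠ x)
    {H : Subgroup (Perm α)} (hswap : ∀ x, swap x (ι x) ∈ H) (hpair : ∀ x y, pairSwap ι x y ∈ H) :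
    centralizer {ι} ≤ H := by
  intro σ hσ
  induction hn : σ.support.card using Nat.strong_induction_on generalizing σ with
  | _ n ih =>
    obtain rfl | hσ1 := eq_or_ne σ 1
    · exact H.one_mem
    obtain ⟨x, hx⟩ := DFunLike.ne_iff.mp hσ1
    by_cases hxι : σ x = ι x
    · rw [← H.mul_mem_cancel_left (hswap x), ← hxι]
      exact ih _ (hn ▸ card_support_swap_mul hx)
        (mul_mem (hxι ▸ swap_iota_mem_centralizer hι x) hσ) rfl
    · rw [← H.mul_mem_cancel_left (hpair x (σ x))]
      exact ih _ (hn ▸ card_support_pairSwap_mul_lt hι hfree hσ hx hxι)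
        (mul_mem (pairSwap_mem_centralizer hι hfree x _) hσ) rfl

variable {H : Subgroup (Perm α)}

theorem swap_iota_mem_of_pairSwap_mem (hι : Involutive ι) (hfree : ∀ x, ι x ≠ x) {c x : α}
    (hc : swap c (ι c) ∈ H) (hcx : pairSwap ι c x ∈ H) : swap x (ι x) ∈ H := by
  obtain rfl | hx := eq_or_ne x (ι c)
  · rwa [hι, swap_comm]
  have hconj := conj_swap_iota (pairSwap_mem_centralizer hι hfree c x) c
  rw [pairSwap_apply_left hι hfree hx] at hconj
  exact hconj ▸ mul_mem (mul_mem hcx hc) (inv_mem hcx)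

theorem pairSwap_iota_left_mem (hι : Involutive ι) {a b : α} (hab : pairSwap ι a b ∈ H)
    (ha : swap a (ι a) ∈ H) : pairSwap ι (ι a) b ∈ H := by
  obtain rfl | hba := eq_or_ne b a
  · rw [pairSwap_comm, pairSwap_iota_right hι]
    exact H.one_mem
  obtain rfl | hbι := eq_or_ne b (ι a)
  · rw [pairSwap_self]
    exact H.one_mem
  have hconj := conj_pairSwap (swap_iota_mem_centralizer hι a) a b
  rw [swap_apply_left, swap_apply_of_ne_of_ne hba hbι] at hconj
  exact hconj ▸ mul_mem (mul_mem ha hab) (inv_mem ha)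

section Transversal

variable (hι : Involutive ι) (hfree : ∀ x, ι x ≠ x) {L : Set α} (hL : ∀ x, x ∈ L ∨ ι x ∈ L)
  (hpair : ∀ i ∈ L, ∀ j ∈ L, pairSwap ι i j ∈ H)
include hι hfree hL hpair

theorem forall_swap_iota_mem {c : α} (hcL : c ∈ L) (hc : swap c (ι c) ∈ H) (x : α) :
    swap x (ι x) ∈ H := by
  obtain hx | hx := hL x
  · exact swap_iota_mem_of_pairSwap_mem hι hfree hc (hpair c hcL x hx)
  · have := swap_iota_mem_of_pairSwap_mem hι hfree hc (hpair c hcL _ hx)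
    rwa [hι, swap_comm] at this

theorem forall_pairSwap_mem (hswap : ∀ x, swap x (ι x) ∈ H) (x y : α) : pairSwap ι x y ∈ H := by
  have hleft : ∀ a, ∀ j ∈ L, pairSwap ι a j ∈ H := by
    intro a j hj
    obtain ha | ha := hL a
    · exact hpair a ha j hj
    · rw [← hι a]
      exact pairSwap_iota_left_mem hι (hpair _ ha j hj) (hswap _)
  obtain hy | hy := hL y
  · exact hleft x y hy
  · rw [← pairSwap_iota_iota hι hfree]
    exact hleft _ _ hy

theorem centralizer_le_of_pairSwap_mem [Fintype α] {c : α} (hcL : c ∈ L)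
    (hc : swap c (ι c) ∈ H) : centralizer {ι} ≤ H :=
  have hswap := forall_swap_iota_mem hι hfree hL hpair hcL hc
  centralizer_le_of_forall_mem hι hfree hswap (forall_pairSwap_mem hι hfree hL hpair hswap)

end Transversal

end Equiv.Perm

open Equiv.Perm

theorem iotaPerm_involutive (n : ℕ) : Involutive (iotaPerm n) :=
  (iotaPerm n).symm_apply_apply

theorem iotaPerm_two_mul_apply_ne (l : ℕ) (x : Fin (2 * l)) : iotaPerm (2 * l) x ≠ x :=
  Fin.ne_of_val_ne (show 2 * l - 1 - (x : ℕ) ≠ x by omega)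

theorem val_lt_or_val_iotaPerm_lt (l : ℕ) (x : Fin (2 * l)) :
    (x : ℕ) < l ∨ (iotaPerm (2 * l) x : ℕ) < l :=
  show _ ∨ 2 * l - 1 - (x : ℕ) < l by omega

theorem pairSwap_iotaPerm_mem {l : ℕ} {H : Subgroup (Perm (Fin (2 * l)))}
    (hgen : ∀ i j : Fin (2 * l), (i : ℕ) < j → (j : ℕ) < l → pairSwap (iotaPerm (2 * l)) i j ∈ H)
    (i : Fin (2 * l)) (hi : (i : ℕ) < l) (j : Fin (2 * l)) (hj : (j : ℕ) < l) :
    pairSwap (iotaPerm (2 * l)) i j ∈ H := by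
  obtain hij | rfl | hji := lt_trichotomy i j
  · exact hgen i j hij hj
  · rw [pairSwap_self]
    exact H.one_mem
  · rw [pairSwap_comm]
    exact hgen j i hji hi

/-- For `l ≥ 2`, the centralizer of `ι` in the symmetric group on `{1,…,2l}`
is generated by the transposition `(l, l+1)` together with the permutations
`(i j)(ι(i) ι(j))` for `1 ≤ i < j ≤ l`. -/
theorem centralizer_iota_generators (l : ℕ) (hl : 2 ≤ l) :
    (Subgroup.centralizer {iotaPerm (2 * l)} : Subgroup (Equiv.Perm (Fin (2 * l)))) =
      Subgroup.closure
        ({Equiv.swap (⟨l - 1, by omega⟩ : Fin (2 * l)) ⟨l, by omega⟩} ∪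
          {x : Equiv.Perm (Fin (2 * l)) | ∃ i j : Fin (2 * l), (i : ℕ) < (j : ℕ) ∧ (j : ℕ) < l ∧
            x = Equiv.swap i j * Equiv.swap (iotaPerm (2 * l) i) (iotaPerm (2 * l) j)}) := by
  have hι := iotaPerm_involutive (2 * l)
  have hfree := iotaPerm_two_mul_apply_ne l
  have hmid : iotaPerm (2 * l) ⟨l - 1, by omega⟩ = ⟨l, by omega⟩ :=
    Fin.ext (show 2 * l - 1 - (l - 1) = l by omega)
  apply le_antisymm
  · exact centralizer_le_of_pairSwap_mem hι hfree (L := {x | (x : ℕ) < l})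
      (val_lt_or_val_iotaPerm_lt l)
      (pairSwap_iotaPerm_mem fun i j hij hj => subset_closure (Or.inr ⟨i, j, hij, hj, rfl⟩))
      (c := ⟨l - 1, by omega⟩) (show l - 1 < l by omega)
      (by rw [hmid]; exact subset_closure (Or.inl rfl))
  · rw [closure_le]
    rintro _ (rfl | ⟨i, j, -, -, rfl⟩)
    · exact hmid ▸ swap_iota_mem_centralizer hι _
    · exact pairSwap_mem_centralizer hι hfree i j
end

section
/- Let F be an algebraically closed field and l ≥ 2. Let Z := {λ·I : λ ∈ F^×} be the subgroup of scalar matrices in GL_l(F), let H := GL_l(F)/Z with quotient map π, let T := π(D) where D is the subgroup of invertible diagonal matrices, and let W̌ := π(P) where P is the subgroup of permutation matrices in GL_l(F). Then the normalizer of T in H is the internal semidirect product of T by W̌; that is: W̌ ⊆ N_H(T), T ∩ W̌ = {1}, and every element of N_H(T) can be written as t·w with t ∈ T and w ∈ W̌. -/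
/-! If `g` normalizes the diagonal torus, conjugating by `g` a diagonal matrix `diagonal c` with
pairwise distinct entries (they exist because `F` is infinite) yields a diagonal matrix
`diagonal e`. Comparing entries of `g * diagonal c = diagonal e * g` shows that `g i j ≠ 0` forces
`e i = c j`, so each column of the invertible matrix `g` has exactly one nonzero entry, in a row
depending injectively on the column: `g` is a diagonal matrix times a permutation matrix.
Scalar matrices are diagonal, so the preimage of `T` in `GL_l(F)` is the diagonal subgroup and the
statement descends to `PGL_l(F)`. -/

open Matrix

noncomputable section

variable (l : ℕ) (F : Type) [Field F]

/-- The permutation matrix of `σ`, with `(i,j)` entry `1` iff `i = σ j`. -/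
def permMat (σ : Equiv.Perm (Fin l)) : Matrix (Fin l) (Fin l) F :=
  Matrix.of fun i j => if i = σ j then 1 else 0

lemma permMat_mul (σ τ : Equiv.Perm (Fin l)) :
    permMat l F σ * permMat l F τ = permMat l F (σ * τ) := by
  ext i j
  simp only [permMat, Matrix.mul_apply, Matrix.of_apply]
  rw [Finset.sum_eq_single (τ j)]
  · simp [Equiv.Perm.mul_apply]; congr
  · intro k _ hk; simp [hk]
  · intro h; simp at h

lemma permMat_one : permMat l F 1 = 1 := by
  ext i j
  simp [permMat, Matrix.one_apply]; congr

/-- The permutation matrix of `σ` as an element of `GL_l(F)`. -/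
def permGL (σ : Equiv.Perm (Fin l)) : GL (Fin l) F :=
  ⟨permMat l F σ, permMat l F σ⁻¹,
    by rw [permMat_mul]; simp [permMat_one],
    by rw [permMat_mul]; simp [permMat_one]⟩

/-- The subgroup `Z` of scalar matrices `λ·I`, `λ ∈ F^×`, in `GL_l(F)`. -/
def scalarZ : Subgroup (GL (Fin l) F) where
  carrier := {x | ∃ c : Fˣ, (x : Matrix (Fin l) (Fin l) F) = (c : F) • (1 : Matrix (Fin l) (Fin l) F)}
  one_mem' := ⟨1, by simp⟩
  mul_mem' := by
    rintro a b ⟨c, hc⟩ ⟨d, hd⟩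
    refine ⟨c * d, ?_⟩
    rw [Units.val_mul, hc, hd, smul_mul_smul_comm, one_mul]
    push_cast
    rfl
  inv_mem' := by
    rintro a ⟨c, hc⟩
    refine ⟨c⁻¹, ?_⟩
    have hau : a = ⟨(c : F) • (1 : Matrix (Fin l) (Fin l) F),
        ((c⁻¹ : Fˣ) : F) • (1 : Matrix (Fin l) (Fin l) F),
        by rw [smul_mul_smul_comm, one_mul, ← Units.val_mul, mul_inv_cancel]; simp,
        by rw [smul_mul_smul_comm, one_mul, ← Units.val_mul, inv_mul_cancel]; simp⟩ :=
      Units.ext hc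
    rw [hau]; rfl

instance scalarZ_normal : (scalarZ l F).Normal := by
  constructor
  rintro x ⟨c, hc⟩ g
  refine ⟨c, ?_⟩
  rw [Units.val_mul, Units.val_mul, hc, mul_smul_comm, mul_one, smul_mul_assoc, Units.mul_inv]

/-- The projective general linear group `H := GL_l(F)/Z`. -/
def PGLq : Type := GL (Fin l) F ⧸ scalarZ l F

instance : Group (PGLq l F) := inferInstanceAs (Group (GL (Fin l) F ⧸ scalarZ l F))

/-- The quotient map `π : GL_l(F) → H`. -/
def piPGL : GL (Fin l) F →* PGLq l F := QuotientGroup.mk' (scalarZ l F)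

/-- The subgroup `D` of invertible diagonal matrices in `GL_l(F)`. -/
def diagGL : Subgroup (GL (Fin l) F) where
  carrier := {x | (x : Matrix (Fin l) (Fin l) F).IsDiag}
  one_mem' := Matrix.isDiag_one
  mul_mem' := by
    intro a b haD hbD
    simp only [Set.mem_setOf_eq] at haD hbD ⊢
    rw [Units.val_mul, ← haD.diagonal_diag, ← hbD.diagonal_diag, diagonal_mul_diagonal]
    exact isDiag_diagonal _
  inv_mem' := by
    intro a haD
    simp only [Set.mem_setOf_eq] at haD ⊢
    rw [Matrix.coe_units_inv, ← haD.diagonal_diag, inv_diagonal]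
    exact isDiag_diagonal _

/-- The subgroup `P` of permutation matrices in `GL_l(F)`. -/
def permSub : Subgroup (GL (Fin l) F) where
  carrier := {x | ∃ σ : Equiv.Perm (Fin l), (x : Matrix (Fin l) (Fin l) F) = permMat l F σ}
  one_mem' := ⟨1, by rw [permMat_one]; rfl⟩
  mul_mem' := by
    rintro a b ⟨σ, ha⟩ ⟨τ, hb⟩
    exact ⟨σ * τ, by rw [Units.val_mul, ha, hb, permMat_mul]⟩
  inv_mem' := by
    rintro a ⟨σ, ha⟩
    have hau : a = permGL l F σ := Units.ext ha
    exact ⟨σ⁻¹, by rw [hau]; rfl⟩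

/-- `T := π(D)`. -/
def Tpgl : Subgroup (PGLq l F) := (diagGL l F).map (piPGL l F)

/-- `W̌ := π(P)`. -/
def Wpgl : Subgroup (PGLq l F) := (permSub l F).map (piPGL l F)

end

namespace Matrix

variable {n R : Type*} [Fintype n] [DecidableEq n] [CommRing R]

def diagonalGL (c : n → Rˣ) : GL n R :=
  ⟨diagonal (c ·), diagonal (fun i => ((c i)⁻¹ : Rˣ)), by simp [diagonal_mul_diagonal],
    by simp [diagonal_mul_diagonal]⟩

variable [IsDomain R] {M : Matrix n n R} {c e : n → R}

lemma eq_of_mul_diagonal_eq_diagonal_mul (h : M * diagonal c = diagonal e * M) {i j : n}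
    (hij : M i j ≠ 0) : e i = c j := by
  have hentry := congrFun (congrFun h i) j
  rw [mul_diagonal, diagonal_mul, mul_comm (e i)] at hentry
  exact (mul_left_cancel₀ hij hentry).symm

lemma exists_perm_eq_zero_of_mul_diagonal_eq_diagonal_mul (hM : M.det ≠ 0)
    (hc : Function.Injective c) (h : M * diagonal c = diagonal e * M) :
    ∃ σ : Equiv.Perm n, ∀ i j, i ≠ σ j → M i j = 0 := by
  have hcol : ∀ j, ∃ i, M i j ≠ 0 := fun j => by
    by_contra! hzero
    exact hM (det_eq_zero_of_column_eq_zero j hzero)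
  choose r hr using hcol
  have hr_inj : Function.Injective r := fun j₁ j₂ hj => hc <| by
    rw [← eq_of_mul_diagonal_eq_diagonal_mul h (hr j₁), hj,
      eq_of_mul_diagonal_eq_diagonal_mul h (hr j₂)]
  set σ := Equiv.ofBijective r hr_inj.bijective_of_finite
  refine ⟨σ, fun i j hij => ?_⟩
  by_contra hMij
  have hσ : σ (σ.symm i) = i := σ.apply_symm_apply i
  have : c (σ.symm i) = c j := by
    rw [← eq_of_mul_diagonal_eq_diagonal_mul h hMij,
      ← eq_of_mul_diagonal_eq_diagonal_mul h (hr (σ.symm i))]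
    exact congrArg e hσ
  exact hij (by rw [← hσ, hc this])

end Matrix

lemma exists_injective_units (G₀ ι : Type*) [GroupWithZero G₀] [Infinite G₀] [Countable ι] :
    ∃ c : ι → G₀ˣ, Function.Injective c := by
  have : Infinite G₀ˣ := (unitsEquivNeZero (G₀ := G₀)).infinite_iff.mpr
    (Set.finite_singleton (0 : G₀)).infinite_compl.to_subtype
  obtain ⟨f, hf⟩ := Countable.exists_injective_nat ι
  exact ⟨_, (Infinite.natEmbedding G₀ˣ).injective.comp hf⟩

section

variable {l : ℕ} {F : Type} [Field F]

lemma permMat_eq_toMatrix (σ : Equiv.Perm (Fin l)) :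
    permMat l F σ = σ.symm.toPEquiv.toMatrix := by
  ext i j
  simp [permMat, PEquiv.toMatrix_apply, Equiv.symm_apply_eq]

lemma mul_permMat_eq_submatrix (M : Matrix (Fin l) (Fin l) F) (σ : Equiv.Perm (Fin l)) :
    M * permMat l F σ = M.submatrix id σ := by
  rw [permMat_eq_toMatrix, PEquiv.mul_toMatrix_toPEquiv, Equiv.symm_symm]

lemma permMat_mul_eq_submatrix (M : Matrix (Fin l) (Fin l) F) (σ : Equiv.Perm (Fin l)) :
    permMat l F σ * M = M.submatrix σ.symm id := by
  rw [permMat_eq_toMatrix, PEquiv.toMatrix_toPEquiv_mul]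

lemma eq_one_of_isDiag_permMat {σ : Equiv.Perm (Fin l)} (h : (permMat l F σ).IsDiag) : σ = 1 := by
  refine Equiv.ext fun j => ?_
  by_contra hj
  simpa [permMat] using h hj

lemma coe_permGL (σ : Equiv.Perm (Fin l)) :
    (permGL l F σ : Matrix (Fin l) (Fin l) F) = permMat l F σ :=
  rfl

lemma permGL_inv (σ : Equiv.Perm (Fin l)) : (permGL l F σ)⁻¹ = permGL l F σ⁻¹ :=
  rfl

lemma mem_permSub_iff {p : GL (Fin l) F} : p ∈ permSub l F ↔ ∃ σ, p = permGL l F σ :=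
  exists_congr fun _ => by rw [Units.ext_iff]; rfl

lemma permSub_le_normalizer_diagGL :
    permSub l F ≤ Subgroup.normalizer (diagGL l F : Set (GL (Fin l) F)) := by
  rw [Subgroup.le_normalizer_iff]
  rintro p hp d (hd : IsDiag _)
  obtain ⟨σ, rfl⟩ := mem_permSub_iff.mp hp
  show IsDiag _
  rw [permGL_inv, Units.val_mul, Units.val_mul, coe_permGL, coe_permGL, permMat_mul_eq_submatrix,
    mul_permMat_eq_submatrix, submatrix_submatrix]
  exact hd.submatrix σ.symm.injective

lemma scalarZ_le_diagGL : scalarZ l F ≤ diagGL l F := by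
  rintro z ⟨c, hc⟩
  show IsDiag _
  rw [hc]
  exact isDiag_one.smul _

variable (l F) in
lemma piPGL_surjective : Function.Surjective (piPGL l F) :=
  QuotientGroup.mk'_surjective _

lemma ker_piPGL : (piPGL l F).ker = scalarZ l F :=
  QuotientGroup.ker_mk' _

lemma comap_piPGL_Tpgl : (Tpgl l F).comap (piPGL l F) = diagGL l F := by
  rw [Tpgl, Subgroup.comap_map_eq, ker_piPGL, sup_eq_left.mpr scalarZ_le_diagGL]

lemma diagGL_inf_permSub : diagGL l F ⊓ permSub l F = ⊥ := by
  rw [eq_bot_iff]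
  rintro p ⟨hd, hp⟩
  obtain ⟨σ, rfl⟩ := mem_permSub_iff.mp hp
  rw [eq_one_of_isDiag_permMat hd, Subgroup.mem_bot]
  exact Units.ext (permMat_one l F)

lemma Tpgl_inf_Wpgl : Tpgl l F ⊓ Wpgl l F = ⊥ := by
  rw [eq_bot_iff]
  rintro x ⟨hxT, p, hp, rfl⟩
  have hp_inf : p ∈ diagGL l F ⊓ permSub l F := ⟨by rwa [← comap_piPGL_Tpgl], hp⟩
  rw [diagGL_inf_permSub, Subgroup.mem_bot] at hp_inf
  rw [Subgroup.mem_bot, hp_inf, map_one]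

lemma exists_mul_of_mem_normalizer_diagGL [Infinite F] {g : GL (Fin l) F}
    (hg : g ∈ Subgroup.normalizer (diagGL l F : Set (GL (Fin l) F))) :
    ∃ d ∈ diagGL l F, ∃ p ∈ permSub l F, g = d * p := by
  obtain ⟨c, hc⟩ := exists_injective_units F (Fin l)
  have hconj : IsDiag (↑(g * diagonalGL c * g⁻¹) : Matrix (Fin l) (Fin l) F) :=
    (Subgroup.mem_normalizer_iff.mp hg _).mp (isDiag_diagonal _)
  have hintertwine : (g : Matrix (Fin l) (Fin l) F) * diagonal (fun i => (c i : F)) =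
      diagonal (↑(g * diagonalGL c * g⁻¹) : Matrix (Fin l) (Fin l) F).diag * g := by
    rw [hconj.diagonal_diag, ← Units.val_mul, inv_mul_cancel_right]
    rfl
  obtain ⟨σ, hσ⟩ := exists_perm_eq_zero_of_mul_diagonal_eq_diagonal_mul
    (isUnits_det_units g).ne_zero (Units.val_injective.comp hc) hintertwine
  refine ⟨g * (permGL l F σ)⁻¹, fun i j hij => ?_, permGL l F σ, ⟨σ, rfl⟩,
    (inv_mul_cancel_right _ _).symm⟩
  rw [permGL_inv, Units.val_mul, coe_permGL, mul_permMat_eq_submatrix]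
  exact hσ i _ (by simpa using hij)

end

theorem pgl_normalizer_torus_semidirect_general
    (F : Type) [Field F] [IsAlgClosed F] (l : ℕ) :
    Wpgl l F ≤ Subgroup.normalizer (Tpgl l F : Set (PGLq l F)) ∧
    Tpgl l F ⊓ Wpgl l F = ⊥ ∧
    ∀ x ∈ Subgroup.normalizer (Tpgl l F : Set (PGLq l F)), ∃ t ∈ Tpgl l F, ∃ w ∈ Wpgl l F, x = t * w := by
  refine ⟨(Subgroup.map_mono permSub_le_normalizer_diagGL).trans (Subgroup.le_normalizer_map _),
    Tpgl_inf_Wpgl, fun x hx => ?_⟩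
  obtain ⟨g, rfl⟩ := piPGL_surjective l F x
  have hg : g ∈ Subgroup.normalizer (diagGL l F : Set (GL (Fin l) F)) := by
    rw [← comap_piPGL_Tpgl, ← Subgroup.comap_normalizer_eq_of_surjective _ (piPGL_surjective l F)]
    exact hx
  obtain ⟨d, hd, p, hp, rfl⟩ := exists_mul_of_mem_normalizer_diagGL hg
  exact ⟨piPGL l F d, ⟨d, hd, rfl⟩, piPGL l F p, ⟨p, hp, rfl⟩, map_mul _ _ _⟩

/-- For `F` algebraically closed and `l ≥ 2`, in `H = PGL_l(F)` the
normalizer of `T = π(D)` is the internal semidirect product of `T` by `W̌ = π(P)`. -/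
theorem pgl_normalizer_torus_semidirect
    (F : Type) [Field F] [IsAlgClosed F] (l : ℕ) (hl : 2 ≤ l) :
    Wpgl l F ≤ Subgroup.normalizer (Tpgl l F : Set (PGLq l F)) ∧
    Tpgl l F ⊓ Wpgl l F = ⊥ ∧
    ∀ x ∈ Subgroup.normalizer (Tpgl l F : Set (PGLq l F)), ∃ t ∈ Tpgl l F, ∃ w ∈ Wpgl l F, x = t * w :=
  pgl_normalizer_torus_semidirect_general F l
end

section
/- Let F be a field, l ≥ 2 an integer, and ω ∈ F with ω^l = −1 (in particular ω is a unit). In the matrix ring M_l(F), for 1 ≤ i ≤ l−1 and t ∈ F^×, define n_i(t) := (1 + t·E_{i,i+1})·(1 − t^{-1}·E_{i+1,i})·(1 + t·E_{i,i+1}) and h_i(t) := n_i(t)·n_i(−1), where E_{ij} are the standard matrix units and 1 is the identity matrix. Then n_1(1)·h_1(−ω)·h_2(−ω²)·⋯·h_{l−1}(−ω^{l−1}) = ω·P, where P is the permutation matrix of the transposition exchanging 1 and 2 (i.e. P coincides with the identity matrix except that its upper-left 2×2 block is [[0,1],[1,0]]). In particular, this product is a scalar multiple of the permutation matrix of (1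 2), hence equal to it modulo the scalar matrices. -/
open Matrix

noncomputable section

variable (l : ℕ) (F : Type) [Field F]

/-- The matrix unit `E_{ab}` (1-based indices `a, b ∈ {1,…,l}`, here encoded 0-based). -/
def matUnit (a b : ℕ) : Matrix (Fin l) (Fin l) F :=
  Matrix.of fun i j => if (i : ℕ) = a ∧ (j : ℕ) = b then 1 else 0

/-- The Chevalley element `n_i(t) = (1 + t·E_{i,i+1})(1 − t⁻¹·E_{i+1,i})(1 + t·E_{i,i+1})`
of `SL_l`, for `1 ≤ i ≤ l − 1` (1-based index `i`, so positions `i, i+1` are `i−1, i`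
in 0-based encoding). -/
def nElt (i : ℕ) (t : F) : Matrix (Fin l) (Fin l) F :=
  (1 + t • matUnit l F (i - 1) i) * (1 - t⁻¹ • matUnit l F i (i - 1)) *
    (1 + t • matUnit l F (i - 1) i)

/-- The Chevalley element `h_i(t) = n_i(t)·n_i(−1)`. -/
def hElt (i : ℕ) (t : F) : Matrix (Fin l) (Fin l) F :=
  nElt l F i t * nElt l F i (-1)

end

/-!
The matrix `n_i(t)` is the monomial matrix `P_{(i,i+1)} · diag(…, -t⁻¹, t, …)`, so `h_i(t)` is a
product of two such matrices; moving the diagonal factor of `n_i(t)` past the transposition swaps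
its two entries and gives `h_i(t) = diag(…, t, t⁻¹, …)`. Hence `h_1(-ω) ⋯ h_{l-1}(-ω^{l-1})`
telescopes to `diag(-ω, ω, …, ω)`, the last entry being `(-ω^{l-1})⁻¹ = ω` because `ω^l = -1`.
With `ε = diag(-1, 1, …, 1)` this is `ω • ε`, while `n_1(1) = P_{(1 2)} · ε`, and `ε² = 1`.
-/

section WeylElement

variable {ι R F : Type*} [Fintype ι] [DecidableEq ι]

lemma diagonal_mul_permMatrix [CommSemiring R] (σ : Equiv.Perm ι) (d : ι → R) :
    diagonal d * σ.permMatrix R = σ.permMatrix R * diagonal (d ∘ σ.symm) := by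
  ext i j
  by_cases h : σ i = j
  · subst h
    simp [PEquiv.toMatrix_apply]
  · simp [PEquiv.toMatrix_apply, h]

lemma permMatrix_swap_mul_self [Semiring R] (a b : ι) :
    (Equiv.swap a b).permMatrix R * (Equiv.swap a b).permMatrix R = 1 := by
  rw [← permMatrix_mul, Equiv.swap_mul_self, permMatrix_one]

variable [Field F] {a b : ι}

def weylElt (a b : ι) (t : F) : Matrix ι ι F :=
  transvection a b t * transvection b a (-t⁻¹) * transvection a b t

lemma weylElt_eq_permMatrix_mul_diagonal (hab : a ≠ b) {t : F} (ht : t ≠ 0) :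
    weylElt a b t =
      (Equiv.swap a b).permMatrix F * diagonal (Pi.mulSingle a (-t⁻¹) * Pi.mulSingle b t) := by
  simp only [weylElt, transvection, add_mul, mul_add, one_mul, mul_one, single_mul_single_same]
  simp only [single_mul_single_of_ne, ne_eq, hab.symm, not_false_eq_true]
  ext i j
  simp only [Matrix.add_apply, one_apply, single_apply, mul_diagonal, Pi.mul_apply,
    Pi.mulSingle_apply, PEquiv.toMatrix_toPEquiv_apply, Pi.single_apply, Equiv.swap_apply_def]
  by_cases hia : i = a <;> by_cases hib : i = b <;> by_cases hja : j = a <;>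
    by_cases hjb : j = b <;> simp_all [eq_comm]

lemma weylElt_mul_weylElt_neg_one (hab : a ≠ b) {t : F} (ht : t ≠ 0) :
    weylElt a b t * weylElt a b (-1) = diagonal (Pi.mulSingle a t * Pi.mulSingle b t⁻¹) := by
  rw [weylElt_eq_permMatrix_mul_diagonal hab ht,
    weylElt_eq_permMatrix_mul_diagonal hab (neg_ne_zero.mpr one_ne_zero),
    mul_assoc, ← mul_assoc (diagonal _), diagonal_mul_permMatrix, ← mul_assoc, ← mul_assoc,
    permMatrix_swap_mul_self, one_mul, diagonal_mul_diagonal]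
  congr 1
  funext i
  simp only [Function.comp_apply, Equiv.symm_swap, Pi.mul_apply, Pi.mulSingle_apply,
    Equiv.swap_apply_def]
  by_cases hia : i = a <;> by_cases hib : i = b <;> simp_all [eq_comm]

end WeylElement

section ChevalleyElements

variable {l : ℕ} {F : Type} [Field F]

lemma permMat_eq_permMatrix_inv (σ : Equiv.Perm (Fin l)) :
    permMat l F σ = σ⁻¹.permMatrix F := by
  ext i j
  simp [permMat, PEquiv.toMatrix_apply, Equiv.symm_apply_eq]

lemma matUnit_eq_single (a b : Fin l) : matUnit l F a b = single a b 1 := by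
  ext i j
  simp [matUnit, single_apply, Fin.ext_iff, eq_comm]

lemma nElt_succ_eq_weylElt {k : ℕ} (hk : k + 1 < l) (t : F) :
    nElt l F (k + 1) t = weylElt (⟨k, by omega⟩ : Fin l) ⟨k + 1, hk⟩ t := by
  have h₁ := matUnit_eq_single (F := F) (⟨k, by omega⟩ : Fin l) ⟨k + 1, hk⟩
  have h₂ := matUnit_eq_single (F := F) (⟨k + 1, hk⟩ : Fin l) ⟨k, by omega⟩
  rw [nElt, Nat.add_sub_cancel, h₁, h₂, weylElt]
  simp only [transvection, smul_single, smul_eq_mul, mul_one, sub_eq_add_neg, ← single_neg]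

lemma hElt_succ_eq_diagonal {k : ℕ} (hk : k + 1 < l) {t : F} (ht : t ≠ 0) :
    hElt l F (k + 1) t =
      diagonal (Pi.mulSingle (⟨k, by omega⟩ : Fin l) t * Pi.mulSingle ⟨k + 1, hk⟩ t⁻¹) := by
  rw [hElt, nElt_succ_eq_weylElt hk, nElt_succ_eq_weylElt hk,
    weylElt_mul_weylElt_neg_one (by simp [Fin.ext_iff]) ht]

/-- The factor `h_k(s k)` puts `s k` at position `k - 1` and `(s k)⁻¹` at position `k` (0-based),
so the entries telescope: `c (i + 1) / c i`, where `c` agrees with `s` on `1 ≤ k ≤ m` and is `1`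
elsewhere. -/
lemma prod_hElt_eq_diagonal (s : ℕ → F) (hs : ∀ k, s k ≠ 0) {m : ℕ} (hm : m < l) :
    ((List.range m).map fun k => hElt l F (k + 1) (s (k + 1))).prod =
      diagonal fun i : Fin l =>
        (Set.Ioc 0 m).mulIndicator s (i + 1) / (Set.Ioc 0 m).mulIndicator s i := by
  induction m with
  | zero => simp
  | succ m ih =>
    rw [List.range_succ, List.map_append, List.prod_append, ih (by omega), List.map_singleton,
      List.prod_singleton, hElt_succ_eq_diagonal hm (hs _), diagonal_mul_diagonal]
    congr 1
    funext ⟨i, hi⟩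
    simp only [Set.mulIndicator_apply, Set.mem_Ioc, Pi.mul_apply, Pi.mulSingle_apply,
      Fin.ext_iff]
    split_ifs <;> first | omega | (subst_vars; field_simp [hs])

lemma mulIndicator_neg_pow_succ_div_mulIndicator (hl : 2 ≤ l) {ω : F} (hω : ω ^ l = -1)
    (hω₀ : ω ≠ 0) {i : ℕ} (hi : i < l) :
    (Set.Ioc 0 (l - 1)).mulIndicator (fun j => -ω ^ j) (i + 1) /
        (Set.Ioc 0 (l - 1)).mulIndicator (fun j => -ω ^ j) i =
      if i = 0 then -ω else ω := by
  simp only [Set.mulIndicator_apply, Set.mem_Ioc]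
  obtain rfl | hi₀ := Nat.eq_zero_or_pos i
  · simp [show l - 1 ≠ 0 by omega]
  obtain hi₁ | rfl : i + 1 < l ∨ i = l - 1 := by omega
  · simp [hi₀, hi₀.ne', show i + 1 ≤ l - 1 by omega, show i ≤ l - 1 by omega, pow_succ, hω₀]
  · have h : ω ^ (l - 1) * ω = -1 := by rw [← pow_succ, Nat.sub_add_cancel (by omega), hω]
    simp [hi₀, hi₀.ne', show ¬ l - 1 + 1 ≤ l - 1 by omega]
    field_simp
    linear_combination -h

end ChevalleyElements

/-- For `ω ∈ F` with `ω^l = −1`,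
`n_1(1)·h_1(−ω)·h_2(−ω²)⋯h_{l−1}(−ω^{l−1}) = ω·P`, where `P` is the permutation matrix of the
transposition `(1 2)`; in particular this product equals `P` modulo scalar matrices. -/
theorem chevalley_product_eq_smul_transposition
    (F : Type) [Field F] (l : ℕ) (hl : 2 ≤ l) (ω : F) (hω : ω ^ l = -1) :
    nElt l F 1 1 *
        ((List.range (l - 1)).map (fun k => hElt l F (k + 1) (-ω ^ (k + 1)))).prod =
      ω • permMat l F (Equiv.swap (⟨0, by omega⟩ : Fin l) ⟨1, by omega⟩) := by
  have hω₀ : ω ≠ 0 := by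
    rintro rfl
    simp [zero_pow (by omega : l ≠ 0)] at hω
  have hn : nElt l F 1 1 = (Equiv.swap (⟨0, by omega⟩ : Fin l) ⟨1, by omega⟩).permMatrix F *
      diagonal (Pi.mulSingle ⟨0, by omega⟩ (-1)) := by
    rw [nElt_succ_eq_weylElt (k := 0) (by omega),
      weylElt_eq_permMatrix_mul_diagonal (by simp [Fin.ext_iff]) one_ne_zero]
    simp
  have hh : ((List.range (l - 1)).map (fun k => hElt l F (k + 1) (-ω ^ (k + 1)))).prod =
      diagonal (ω • Pi.mulSingle ⟨0, by omega⟩ (-1)) := by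
    rw [prod_hElt_eq_diagonal (fun j => -ω ^ j) (by simp [hω₀]) (by omega : l - 1 < l)]
    congr 1
    funext ⟨i, hi⟩
    rw [mulIndicator_neg_pow_succ_div_mulIndicator hl hω hω₀ hi]
    simp only [Pi.smul_apply, Pi.mulSingle_apply, Fin.ext_iff, smul_eq_mul]
    split_ifs <;> ring
  rw [hn, hh, permMat_eq_permMatrix_inv, Equiv.swap_inv, diagonal_smul, Matrix.mul_smul,
    mul_assoc, diagonal_mul_diagonal, ← Pi.mul_def, ← Pi.mulSingle_mul, neg_one_mul, neg_neg,
    Pi.mulSingle_one, Pi.one_def, diagonal_one, mul_one]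
end
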